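/- arXiv:2104.02105 — 4 statements merged into one kernel-verified Lean document; each statement's English description precedes it below -/
import Mathlib

section
/- Let A be a symmetric positive definite p×p real matrix and B a symmetric positive semidefinite p×p real matrix. Then the matrix A⁻¹ ⊗ A⁻¹ − (A+B)⁻¹ ⊗ (A+B)⁻¹ (Kronecker product) is positive semidefinite. -/
/-!
For `0 ≤ Y ≤ X` we have `X ⊗ X - Y ⊗ Y = X ⊗ (X - Y) + (X - Y) ⊗ Y`, a sum of Kronecker products
of positive semidefinite matrices. It therefore suffices that matrix inversion is antitone,
`(A + B)⁻¹ ≤ A⁻¹`, which follows from the identity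
`A⁻¹ - (A + B)⁻¹ = (A + B)⁻¹ (B + B A⁻¹ B) (A + B)⁻¹`.
-/

open Matrix Kronecker
open scoped ComplexOrder

namespace Matrix

variable {n : Type*} [Fintype n]

theorem inv_sub_inv_add_eq {R : Type*} [CommRing R] [DecidableEq n] {A B : Matrix n n R}
    (hA : IsUnit A) (hAB : IsUnit (A + B)) :
    A⁻¹ - (A + B)⁻¹ = (A + B)⁻¹ * (B + B * A⁻¹ * B) * (A + B)⁻¹ := by
  have hA' := A.isUnit_iff_isUnit_det.mp hA
  have hAB' := (A + B).isUnit_iff_isUnit_det.mp hAB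
  have hmiddle : B + B * A⁻¹ * B = (A + B) * A⁻¹ * (A + B) - (A + B) := by
    simp only [add_mul, mul_add, mul_nonsing_inv _ hA', nonsing_inv_mul_cancel_right _ _ hA',
      one_mul]
    abel
  rw [hmiddle, mul_sub, sub_mul]
  simp only [← mul_assoc, nonsing_inv_mul _ hAB', one_mul, mul_nonsing_inv_cancel_right _ _ hAB']

variable {𝕜 : Type*} [RCLike 𝕜]

theorem PosDef.posSemidef_inv_sub_inv_add [DecidableEq n] {A B : Matrix n n 𝕜} (hA : A.PosDef)
    (hB : B.PosSemidef) : (A⁻¹ - (A + B)⁻¹).PosSemidef := by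
  have hAB := hA.add_posSemidef hB
  have hmiddle : (B + B * A⁻¹ * B).PosSemidef := by
    refine hB.add ?_
    simpa only [hB.isHermitian.eq] using hA.inv.posSemidef.conjTranspose_mul_mul_same B
  rw [inv_sub_inv_add_eq hA.isUnit hAB.isUnit]
  simpa only [hAB.inv.isHermitian.eq] using hmiddle.conjTranspose_mul_mul_same (A + B)⁻¹

theorem PosSemidef.kronecker_self_sub_kronecker_self {X Y : Matrix n n 𝕜} (hY : Y.PosSemidef)
    (hXY : (X - Y).PosSemidef) : (X ⊗ₖ X - Y ⊗ₖ Y).PosSemidef := by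
  have hX : X.PosSemidef := by simpa using hY.add hXY
  have hsplit : X ⊗ₖ X - Y ⊗ₖ Y = X ⊗ₖ (X - Y) + (X - Y) ⊗ₖ Y := by
    ext ⟨i, i'⟩ ⟨j, j'⟩
    simp only [sub_apply, add_apply, kroneckerMap_apply]
    ring
  rw [hsplit]
  exact (hX.kronecker hXY).add (hXY.kronecker hY)

end Matrix

theorem kronecker_inv_sub_posSemidef (p : ℕ) (A B : Matrix (Fin p) (Fin p) ℝ)
    (hA : A.PosDef) (hB : B.PosSemidef) :
    (A⁻¹ ⊗ₖ A⁻¹ - (A + B)⁻¹ ⊗ₖ (A + B)⁻¹).PosSemidef :=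
  (hA.add_posSemidef hB).inv.posSemidef.kronecker_self_sub_kronecker_self
    (hA.posSemidef_inv_sub_inv_add hB)
end

section
/- For any symmetric positive definite p×p matrices A and A+B (with B symmetric positive semidefinite) and any p×p real matrix C, it holds that tr(C⊤(A+B)C(A+B)) − tr(C⊤ A C A) = tr((A+B)^{1/2} C B C⊤ (A+B)^{1/2}) + tr(A^{1/2} C⊤ B C A^{1/2}) ≥ 0. -/
/-!
Since `A + B = (A + B)^{1/2} (A + B)^{1/2}` and `A = A^{1/2} A^{1/2}`, cycling the trace turns the
right-hand side into `tr((A + B) C B Cᵀ) + tr(A Cᵀ B C)`, and expanding the left-hand side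
bilinearly in `A + B` gives the same polynomial identity. Each summand on the right is the trace
of a congruence `S X S` of a positive semidefinite `X = C B Cᵀ` or `Cᵀ B C` by a positive
semidefinite `S`, hence nonnegative.
-/

open Matrix
open scoped MatrixOrder ComplexOrder

section Sqrt

variable {n 𝕜 : Type*} [Fintype n] [DecidableEq n] [RCLike 𝕜] {M X : Matrix n n 𝕜}

lemma Matrix.trace_sqrt_mul_mul_sqrt (hM : 0 ≤ M) (X : Matrix n n 𝕜) :
    (CFC.sqrt M * X * CFC.sqrt M).trace = (M * X).trace := by
  rw [trace_mul_cycle, CFC.sqrt_mul_sqrt_self M hM]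

lemma Matrix.trace_sqrt_mul_mul_sqrt_nonneg (hX : 0 ≤ X) (M : Matrix n n 𝕜) :
    0 ≤ (CFC.sqrt M * X * CFC.sqrt M).trace :=
  (nonneg_iff_posSemidef.mp (conjugate_nonneg_of_nonneg hX (CFC.sqrt_nonneg M))).trace_nonneg

end Sqrt

lemma Matrix.trace_transpose_mul_add_sub {n R : Type*} [Fintype n] [CommRing R]
    (A B C : Matrix n n R) :
    (Cᵀ * (A + B) * C * (A + B)).trace - (Cᵀ * A * C * A).trace =
      ((A + B) * (C * B * Cᵀ)).trace + (A * (Cᵀ * B * C)).trace := by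
  have hcycle : ((A + B) * (C * B * Cᵀ)).trace = (Cᵀ * (A + B) * C * B).trace := by
    rw [trace_mul_comm (A + B), show Cᵀ * (A + B) * C * B = Cᵀ * (A + B) * (C * B) by
      simp only [Matrix.mul_assoc], trace_mul_comm (Cᵀ * (A + B))]
    simp only [Matrix.mul_assoc]
  have hswap : (A * (Cᵀ * B * C)).trace = (Cᵀ * B * C * A).trace := trace_mul_comm _ _
  rw [hcycle, hswap]
  simp only [mul_add, add_mul, trace_add]
  ring

lemma Matrix.mul_mul_transpose_nonneg {n : Type*} [Fintype n] {B : Matrix n n ℝ} (hB : 0 ≤ B)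
    (C : Matrix n n ℝ) : 0 ≤ C * B * Cᵀ := by
  simpa only [star_eq_conjTranspose, conjTranspose_eq_transpose_of_trivial]
    using star_right_conjugate_nonneg hB C

theorem trace_diff_eq_sqrt_traces (p : ℕ) (A B C : Matrix (Fin p) (Fin p) ℝ)
    (hA : A.PosDef) (hB : B.PosSemidef) :
    ((Cᵀ * (A + B) * C * (A + B)).trace - (Cᵀ * A * C * A).trace =
      (CFC.sqrt (A + B) * C * B * Cᵀ * CFC.sqrt (A + B)).trace +
        (CFC.sqrt A * Cᵀ * B * C * CFC.sqrt A).trace) ∧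
    0 ≤ (Cᵀ * (A + B) * C * (A + B)).trace - (Cᵀ * A * C * A).trace := by
  have hA₀ : 0 ≤ A := hA.posSemidef.nonneg
  have hB₀ : 0 ≤ B := hB.nonneg
  have hS₀ : 0 ≤ A + B := add_nonneg hA₀ hB₀
  have hreassoc : ∀ S X Y Z : Matrix (Fin p) (Fin p) ℝ, S * X * Y * Z * S = S * (X * Y * Z) * S :=
    fun S X Y Z ↦ by simp only [Matrix.mul_assoc]
  rw [hreassoc, hreassoc]
  have hidentity := trace_transpose_mul_add_sub A B C
  rw [← trace_sqrt_mul_mul_sqrt hS₀, ← trace_sqrt_mul_mul_sqrt hA₀] at hidentity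
  refine ⟨hidentity, hidentity ▸ add_nonneg ?_ ?_⟩
  · exact trace_sqrt_mul_mul_sqrt_nonneg (mul_mul_transpose_nonneg hB₀ C) _
  · simpa only [transpose_transpose] using
      trace_sqrt_mul_mul_sqrt_nonneg (mul_mul_transpose_nonneg hB₀ Cᵀ) A
end

section
/- Let Ψ be a symmetric positive definite p×p matrix, V symmetric positive semidefinite, n ≥ 1, and let J₂ > 0 satisfy 2nJ₂/(2pn+p²n²) > 0 and 1 + (1/2 − (2pn+p²n²)/(8J₂))pn > 0. With G_p the duplication matrix and A = (Ψ+V)⁻¹, one has det( (G_p⊤G_p)⁻¹ G_p⊤ [ c₁ vec(nA) vec(nA)⊤ + c₂ (A ⊗ A) ] G_p ) = c₂^{p(p+1)/2} (1 + (c₁/c₂) n² p) det(A)^{p+1}, where c₁ = J₂/(2pn+p²n²) − 1/4 and c₂ = 2nJ₂/(2pn+p²n²). -/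
/-! In `vech` coordinates, `(GᵀG)⁻¹ Gᵀ (X ⊗ₖ X) G` is the matrix of the congruence `S ↦ X S Xᵀ`
on symmetric matrices, so it is multiplicative in `X`; diagonalising `A` orthogonally, its
determinant is `∏_{j ≤ i} λᵢ λⱼ = (det A) ^ (p + 1)`. The `c₁` term is a rank-one perturbation
whose column `vech (n A)` is the image of `vech (n A⁻¹)`, so the matrix determinant lemma
contributes `1 + (c₁ / c₂) ⟪vec (n A), vec (n A⁻¹)⟫ = 1 + (c₁ / c₂) n² tr 1`. -/

open Matrix Kronecker

/-- Index set for the half-vectorization `vech` of a `p × p` symmetric matrix. -/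
abbrev VechIdx (p : ℕ) := {ij : Fin p × Fin p // ij.2 ≤ ij.1}

/-- The duplication matrix `G_p`, satisfying `G_p vech(S) = vec(S)` for symmetric `S`. -/
def dupMatrix (p : ℕ) : Matrix (Fin p × Fin p) (VechIdx p) ℝ :=
  fun ij k => if ij = k.1 ∨ (ij.2, ij.1) = k.1 then 1 else 0

/-- The `vec` operator. -/
def vecOp {p : ℕ} (M : Matrix (Fin p) (Fin p) ℝ) : Fin p × Fin p → ℝ :=
  fun ij => M ij.1 ij.2

theorem Matrix.IsSymm.mul_mul_transpose {m n α : Type*} [Fintype n] [CommSemiring α]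
    {S : Matrix n n α} (hS : S.IsSymm) (X : Matrix m n α) : (X * S * Xᵀ).IsSymm := by
  simp only [IsSymm, transpose_mul, transpose_transpose, hS.eq, Matrix.mul_assoc]

theorem det_smul_vecMulVec_mulVec_add_smul {m K : Type*} [Fintype m] [DecidableEq m] [Field K]
    (M : Matrix m m K) (x w : m → K) {c d : K} (hd : d ≠ 0) :
    (c • vecMulVec (M *ᵥ x) w + d • M).det =
      d ^ Fintype.card m * M.det * (1 + c / d * (w ⬝ᵥ x)) := by
  have hfactor :
      d • (M * (1 + vecMulVec ((c / d) • x) w)) = c • vecMulVec (M *ᵥ x) w + d • M := by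
    rw [Matrix.mul_add, Matrix.mul_one, mul_vecMulVec, mulVec_smul, smul_add, ← smul_vecMulVec,
      smul_smul, mul_div_cancel₀ _ hd, smul_vecMulVec, add_comm]
  rw [← hfactor, det_smul, det_mul, vecMulVec_eq Unit, det_one_add_replicateCol_mul_replicateRow,
    dotProduct_smul, smul_eq_mul, mul_assoc]

theorem prod_vechIdx {M : Type*} [CommMonoid M] {p : ℕ} (d : Fin p → M) :
    ∏ k : VechIdx p, d k.1.1 * d k.1.2 = (∏ i, d i) ^ (p + 1) := by
  classical
  have hfst (i : Fin p) : ∏ j : Fin p, (if j ≤ i then d i else 1) = d i ^ ((i : ℕ) + 1) := by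
    rw [← Finset.prod_filter, Finset.filter_ge_eq_Iic, Finset.prod_const, Fin.card_Iic]
  have hsnd (j : Fin p) : ∏ i : Fin p, (if j ≤ i then d j else 1) = d j ^ (p - j) := by
    rw [← Finset.prod_filter, Finset.filter_le_eq_Ici, Finset.prod_const, Fin.card_Ici]
  calc ∏ k : VechIdx p, d k.1.1 * d k.1.2
      = ∏ i, ∏ j, if j ≤ i then d i * d j else 1 := by
        rw [← Fintype.prod_prod_type' (f := fun i j => if j ≤ i then d i * d j else 1),
          ← Finset.prod_filter]
        refine (Finset.prod_subtype _ ?_ (fun ij : Fin p × Fin p => d ij.1 * d ij.2)).symm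
        simp
    _ = (∏ i, d i ^ ((i : ℕ) + 1)) * ∏ j, d j ^ (p - j) := by
        simp only [ite_mul_one, Finset.prod_mul_distrib, hfst]
        rw [Finset.prod_comm]
        simp only [hsnd]
    _ = (∏ i, d i) ^ (p + 1) := by
        rw [← Finset.prod_mul_distrib, ← Finset.prod_pow]
        refine Finset.prod_congr rfl fun i _ => ?_
        rw [← pow_add]; congr 1; omega

theorem card_vechIdx (p : ℕ) : Fintype.card (VechIdx p) = p * (p + 1) / 2 := by
  -- `prod_vechIdx` at `d ≡ 2` reads `4 ^ card = 2 ^ (p * (p + 1))`.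
  have h := prod_vechIdx (fun _ : Fin p => 2)
  simp only [Finset.prod_const, Finset.card_univ, Fintype.card_fin, ← pow_mul] at h
  rw [← sq, ← pow_mul] at h
  have := Nat.pow_right_injective le_rfl h
  omega

section Duplication
variable {p : ℕ}

def vech (S : Matrix (Fin p) (Fin p) ℝ) : VechIdx p → ℝ := fun k => S k.1.1 k.1.2

theorem vecOp_eq_vec_transpose (M : Matrix (Fin p) (Fin p) ℝ) : vecOp M = vec Mᵀ := rfl

theorem vecOp_dotProduct_vecOp (M N : Matrix (Fin p) (Fin p) ℝ) :
    vecOp M ⬝ᵥ vecOp N = (M * Nᵀ).trace := by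
  rw [vecOp_eq_vec_transpose, vecOp_eq_vec_transpose, vec_dotProduct_vec, transpose_transpose]

theorem kronecker_mulVec_vecOp (X Y S : Matrix (Fin p) (Fin p) ℝ) :
    (X ⊗ₖ Y) *ᵥ vecOp S = vecOp (X * S * Yᵀ) := by
  rw [vecOp_eq_vec_transpose, kronecker_mulVec_vec, vecOp_eq_vec_transpose]
  simp only [transpose_mul, transpose_transpose, Matrix.mul_assoc]

theorem dupMatrix_swap_apply (i j : Fin p) (k : VechIdx p) :
    dupMatrix p (j, i) k = dupMatrix p (i, j) k := by
  simp only [dupMatrix, or_comm]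

theorem dupMatrix_val_apply (k l : VechIdx p) : dupMatrix p k.1 l = (1 : Matrix _ _ ℝ) k l := by
  obtain ⟨⟨i, j⟩, hk⟩ := k
  obtain ⟨⟨i', j'⟩, hl⟩ := l
  simp only [dupMatrix, one_apply, Subtype.mk.injEq, Prod.mk.injEq]
  refine if_congr ⟨?_, Or.inl⟩ rfl rfl
  rintro (h | ⟨rfl, rfl⟩)
  · exact h
  · exact ⟨le_antisymm hl hk, le_antisymm hk hl⟩

theorem dupMatrix_mulVec_val (x : VechIdx p → ℝ) (k : VechIdx p) :
    (dupMatrix p *ᵥ x) k.1 = x k := by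
  simp only [mulVec, dotProduct, dupMatrix_val_apply, one_apply, ite_mul, one_mul, zero_mul,
    Finset.sum_ite_eq, Finset.mem_univ, if_true]

theorem dupMatrix_mulVec_vech {S : Matrix (Fin p) (Fin p) ℝ} (hS : S.IsSymm) :
    dupMatrix p *ᵥ vech S = vecOp S := by
  have lower (i j : Fin p) (h : j ≤ i) : (dupMatrix p *ᵥ vech S) (i, j) = S i j :=
    dupMatrix_mulVec_val (vech S) ⟨(i, j), h⟩
  ext ⟨i, j⟩
  rcases le_total j i with h | h
  · exact lower i j h
  · have hswap : (dupMatrix p *ᵥ vech S) (i, j) = (dupMatrix p *ᵥ vech S) (j, i) := by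
      simp only [mulVec, dotProduct, dupMatrix_swap_apply]
    rw [hswap, lower j i h]
    exact hS.apply i j

theorem exists_isSymm_vech_eq (x : VechIdx p → ℝ) :
    ∃ S : Matrix (Fin p) (Fin p) ℝ, S.IsSymm ∧ vech S = x := by
  refine ⟨of fun i j => (dupMatrix p *ᵥ x) (i, j), ?_, funext (dupMatrix_mulVec_val x)⟩
  ext i j
  simp only [transpose_apply, of_apply, mulVec, dotProduct, dupMatrix_swap_apply]

theorem injective_dupMatrix_mulVec : Function.Injective (dupMatrix p).mulVec := fun x y h =>
  funext fun k => by rw [← dupMatrix_mulVec_val x, h, dupMatrix_mulVec_val]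

theorem isUnit_det_transpose_mul_dupMatrix : IsUnit ((dupMatrix p)ᵀ * dupMatrix p).det := by
  rw [← isUnit_iff_isUnit_det, ← conjTranspose_eq_transpose_of_trivial]
  exact (PosDef.conjTranspose_mul_self _ injective_dupMatrix_mulVec).isUnit

noncomputable def dupPinv (p : ℕ) : Matrix (VechIdx p) (Fin p × Fin p) ℝ :=
  ((dupMatrix p)ᵀ * dupMatrix p)⁻¹ * (dupMatrix p)ᵀ

theorem dupPinv_mul_dupMatrix : dupPinv p * dupMatrix p = 1 := by
  rw [dupPinv, Matrix.mul_assoc, nonsing_inv_mul _ isUnit_det_transpose_mul_dupMatrix]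

theorem dupPinv_mulVec_vecOp {S : Matrix (Fin p) (Fin p) ℝ} (hS : S.IsSymm) :
    dupPinv p *ᵥ vecOp S = vech S := by
  rw [← dupMatrix_mulVec_vech hS, mulVec_mulVec, dupPinv_mul_dupMatrix, one_mulVec]


theorem ext_of_mulVec_vech {P Q : Matrix (VechIdx p) (VechIdx p) ℝ}
    (h : ∀ S : Matrix (Fin p) (Fin p) ℝ, S.IsSymm → P *ᵥ vech S = Q *ᵥ vech S) : P = Q :=
  ext_iff_mulVec.mpr fun x => by
    obtain ⟨S, hS, rfl⟩ := exists_isSymm_vech_eq x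
    exact h S hS

noncomputable def vechCongr (X : Matrix (Fin p) (Fin p) ℝ) : Matrix (VechIdx p) (VechIdx p) ℝ :=
  dupPinv p * (X ⊗ₖ X) * dupMatrix p

theorem vechCongr_mulVec_vech (X : Matrix (Fin p) (Fin p) ℝ) {S : Matrix (Fin p) (Fin p) ℝ}
    (hS : S.IsSymm) : vechCongr X *ᵥ vech S = vech (X * S * Xᵀ) := by
  rw [vechCongr, ← mulVec_mulVec, dupMatrix_mulVec_vech hS, ← mulVec_mulVec,
    kronecker_mulVec_vecOp, dupPinv_mulVec_vecOp (hS.mul_mul_transpose X)]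

theorem vechCongr_mul (X Y : Matrix (Fin p) (Fin p) ℝ) :
    vechCongr X * vechCongr Y = vechCongr (X * Y) := by
  refine ext_of_mulVec_vech fun S hS => ?_
  rw [← mulVec_mulVec, vechCongr_mulVec_vech Y hS, vechCongr_mulVec_vech X (hS.mul_mul_transpose Y),
    vechCongr_mulVec_vech _ hS, transpose_mul]
  simp only [Matrix.mul_assoc]

theorem vechCongr_one : vechCongr (1 : Matrix (Fin p) (Fin p) ℝ) = 1 :=
  ext_of_mulVec_vech fun S hS => by
    rw [vechCongr_mulVec_vech _ hS, Matrix.one_mul, transpose_one, Matrix.mul_one, one_mulVec]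

theorem vechCongr_diagonal (d : Fin p → ℝ) :
    vechCongr (diagonal d) = diagonal fun k : VechIdx p => d k.1.1 * d k.1.2 :=
  ext_of_mulVec_vech fun S hS => by
    ext k
    rw [vechCongr_mulVec_vech _ hS, diagonal_transpose, mulVec_diagonal]
    simp only [vech, mul_diagonal, diagonal_mul]
    ring

theorem det_vechCongr {A : Matrix (Fin p) (Fin p) ℝ} (hA : A.IsHermitian) :
    (vechCongr A).det = A.det ^ (p + 1) := by
  set U : Matrix (Fin p) (Fin p) ℝ := (hA.eigenvectorUnitary : Matrix (Fin p) (Fin p) ℝ)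
  have hUU : U * star U = 1 := Unitary.mul_star_self_of_mem hA.eigenvectorUnitary.2
  have hA_eq : A = U * diagonal hA.eigenvalues * star U := by
    conv_lhs => rw [hA.spectral_theorem]
    simp [U]
  calc (vechCongr A).det
      = (vechCongr U * vechCongr (star U)).det * (vechCongr (diagonal hA.eigenvalues)).det := by
        conv_lhs => rw [hA_eq]
        rw [← vechCongr_mul, ← vechCongr_mul, det_mul, det_mul, det_mul]
        ring
    _ = (∏ i, hA.eigenvalues i) ^ (p + 1) := by
        rw [vechCongr_mul, hUU, vechCongr_one, det_one, one_mul, vechCongr_diagonal,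
          det_diagonal, prod_vechIdx]
    _ = A.det ^ (p + 1) := by rw [hA.det_eq_prod_eigenvalues]; simp

end Duplication

theorem homoscedastic_det_identity_general (p n : ℕ)
    (Ψ V : Matrix (Fin p) (Fin p) ℝ) (hΨ : Ψ.PosDef) (hV : V.PosSemidef)
    (c₁ c₂ : ℝ)
    (hc₂_pos : 0 < c₂)
    (A : Matrix (Fin p) (Fin p) ℝ) (hA : A = (Ψ + V)⁻¹) :
    (((dupMatrix p)ᵀ * dupMatrix p)⁻¹ * (dupMatrix p)ᵀ *
        (c₁ • vecMulVec (vecOp ((n : ℝ) • A)) (vecOp ((n : ℝ) • A)) + c₂ • (A ⊗ₖ A)) *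
        dupMatrix p).det =
      c₂ ^ (p * (p + 1) / 2) * (1 + c₁ / c₂ * (n : ℝ) ^ 2 * p) * A.det ^ (p + 1) := by
  have hA_pd : A.PosDef := hA ▸ (hΨ.add_posSemidef hV).inv
  have hA_symm : A.IsSymm := isHermitian_iff_isSymm.mp hA_pd.isHermitian
  have hA_inv_symm : A⁻¹.IsSymm := isHermitian_iff_isSymm.mp hA_pd.isHermitian.inv
  have hA_unit : IsUnit A.det := hA_pd.det_pos.ne'.isUnit
  set x := vech ((n : ℝ) • A⁻¹)
  set w := vecOp ((n : ℝ) • A) ᵥ* dupMatrix p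
  have hx : vechCongr A *ᵥ x = dupPinv p *ᵥ vecOp ((n : ℝ) • A) := by
    rw [vechCongr_mulVec_vech _ (hA_inv_symm.smul _), dupPinv_mulVec_vecOp (hA_symm.smul _),
      hA_symm.eq, Matrix.mul_smul, Matrix.smul_mul, mul_nonsing_inv _ hA_unit, Matrix.one_mul]
  have hwx : w ⬝ᵥ x = (n : ℝ) ^ 2 * p := by
    rw [← dotProduct_mulVec, dupMatrix_mulVec_vech (hA_inv_symm.smul _), vecOp_dotProduct_vecOp,
      transpose_smul, hA_inv_symm.eq, Matrix.smul_mul, Matrix.mul_smul, mul_nonsing_inv _ hA_unit,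
      trace_smul, trace_smul, trace_one, Fintype.card_fin, smul_eq_mul, smul_eq_mul]
    ring
  have hsplit : dupPinv p * (c₁ • vecMulVec (vecOp ((n : ℝ) • A)) (vecOp ((n : ℝ) • A)) +
      c₂ • (A ⊗ₖ A)) * dupMatrix p = c₁ • vecMulVec (vechCongr A *ᵥ x) w + c₂ • vechCongr A := by
    rw [hx, Matrix.mul_add, Matrix.add_mul, Matrix.mul_smul, Matrix.smul_mul, Matrix.mul_smul,
      Matrix.smul_mul, mul_vecMulVec, vecMulVec_mul]
    rfl
  rw [show ((dupMatrix p)ᵀ * dupMatrix p)⁻¹ * (dupMatrix p)ᵀ = dupPinv p from rfl, hsplit,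
    det_smul_vecMulVec_mulVec_add_smul _ _ _ hc₂_pos.ne', det_vechCongr hA_pd.isHermitian,
    card_vechIdx, hwx]
  ring

/-- The homoscedastic determinant identity used in Corollary 2 of the paper. -/
theorem homoscedastic_det_identity (p n : ℕ) (hp : 0 < p) (hn : 1 ≤ n)
    (Ψ V : Matrix (Fin p) (Fin p) ℝ) (hΨ : Ψ.PosDef) (hV : V.PosSemidef)
    (J₂ : ℝ) (hJ₂ : 0 < J₂)
    (c₁ c₂ : ℝ)
    (hc₁ : c₁ = J₂ / (2 * p * n + (p : ℝ) ^ 2 * (n : ℝ) ^ 2) - 1 / 4)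
    (hc₂ : c₂ = 2 * n * J₂ / (2 * p * n + (p : ℝ) ^ 2 * (n : ℝ) ^ 2))
    (hc₂_pos : 0 < c₂)
    (hpos : 0 < 1 + (1 / 2 - (2 * p * n + (p : ℝ) ^ 2 * (n : ℝ) ^ 2) / (8 * J₂)) * (p * n : ℝ))
    (A : Matrix (Fin p) (Fin p) ℝ) (hA : A = (Ψ + V)⁻¹) :
    (((dupMatrix p)ᵀ * dupMatrix p)⁻¹ * (dupMatrix p)ᵀ *
        (c₁ • vecMulVec (vecOp ((n : ℝ) • A)) (vecOp ((n : ℝ) • A)) + c₂ • (A ⊗ₖ A)) *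
        dupMatrix p).det =
      c₂ ^ (p * (p + 1) / 2) * (1 + c₁ / c₂ * (n : ℝ) ^ 2 * p) * A.det ^ (p + 1) :=
  homoscedastic_det_identity_general p n Ψ V hΨ hV c₁ c₂ hc₂_pos A hA
end

section
/- For the multivariate t density generator f(u) = K(1+u/d)^{−(pn+d)/2} on ℝ^{pn} (with d > 0 degrees of freedom and K the normalizing constant), the quantity J₂ = E[(R²)²(f′(R²)/f(R²))²], where R² = Z⊤Z and Z has density z ↦ f(z⊤z), equals pn(pn+2)(pn+d)/(4(pn+2+d)); consequently J₂/(2pn+p²n²) − 1/4 = (1/4)((pn+d)/(pn+d+2) − 1) < 0. -/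
/-!
In polar coordinates, with `y = R²`, the expectation becomes `∫₀^∞ y^(m/2-1) y² (f'/f)² f(y) dy`
(with `m = pn`). Since `f'/f = -((m+d)/2)/(d+y)`, this is a scaled Beta integral of the second
kind, `∫₀^∞ y^(a-1) (1 + y/d)^(-(a+b)) dy = d^a Γ(a)Γ(b)/Γ(a+b)` with `a = m/2 + 2`, `b = d/2`,
and by `Γ(s + 2) = s (s + 1) Γ(s)` the Gamma factors cancel against the normalizing constant.
-/

open MeasureTheory Real Set Module

theorem integral_rpow_mul_one_sub_rpow_Ioo {a b : ℝ} (ha : 0 < a) (hb : 0 < b) :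
    ∫ x in Ioo (0 : ℝ) 1, x ^ (a - 1) * (1 - x) ^ (b - 1) =
      Gamma a * Gamma b / Gamma (a + b) := by
  have hbeta : Complex.betaIntegral a b =
      ((∫ x in (0 : ℝ)..1, x ^ (a - 1) * (1 - x) ^ (b - 1) : ℝ) : ℂ) := by
    rw [Complex.betaIntegral, ← intervalIntegral.integral_ofReal]
    refine intervalIntegral.integral_congr fun x hx => ?_
    rw [uIcc_of_le zero_le_one] at hx
    simp only [Complex.ofReal_mul, Complex.ofReal_cpow hx.1,
      Complex.ofReal_cpow (sub_nonneg.2 hx.2)]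
    push_cast
    rfl
  have hGamma := Complex.Gamma_mul_Gamma_eq_betaIntegral (s := a) (t := b) (by simpa) (by simpa)
  rw [hbeta, ← Complex.ofReal_add, Complex.Gamma_ofReal, Complex.Gamma_ofReal,
    Complex.Gamma_ofReal] at hGamma
  rw [← integral_Ioc_eq_integral_Ioo, ← intervalIntegral.integral_of_le zero_le_one,
    eq_div_iff (Gamma_pos_of_pos (add_pos ha hb)).ne']
  exact_mod_cast (hGamma.trans (mul_comm _ _)).symm

theorem image_div_one_sub_Ioo : (fun x : ℝ => x / (1 - x)) '' Ioo 0 1 = Ioi 0 := by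
  ext y
  constructor
  · rintro ⟨x, ⟨hx0, hx1⟩, rfl⟩
    exact div_pos hx0 (sub_pos.2 hx1)
  · intro (hy : 0 < y)
    refine ⟨y / (1 + y), ⟨by positivity, (div_lt_one (by positivity)).2 (lt_one_add y)⟩, ?_⟩
    field_simp
    ring

theorem injOn_div_one_sub_Ioo : InjOn (fun x : ℝ => x / (1 - x)) (Ioo 0 1) := by
  intro x ⟨_, hx⟩ y ⟨_, hy⟩ hxy
  rw [div_eq_div_iff (sub_pos.2 hx).ne' (sub_pos.2 hy).ne'] at hxy
  linarith

theorem integral_rpow_mul_one_add_rpow_neg_Ioi {a b : ℝ} (ha : 0 < a) (hb : 0 < b) :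
    ∫ t in Ioi (0 : ℝ), t ^ (a - 1) * (1 + t) ^ (-(a + b)) =
      Gamma a * Gamma b / Gamma (a + b) := by
  have hderiv : ∀ x ∈ Ioo (0 : ℝ) 1,
      HasDerivWithinAt (fun x : ℝ => x / (1 - x)) ((1 - x) ^ (-2 : ℝ)) (Ioo 0 1) x := by
    intro x ⟨_, hx⟩
    have hx' : (1 : ℝ) - x ≠ 0 := (sub_pos.2 hx).ne'
    refine (((hasDerivAt_id' x).div ((hasDerivAt_id' x).const_sub 1) hx').congr_deriv
      ?_).hasDerivWithinAt
    rw [rpow_neg (sub_pos.2 hx).le, rpow_two]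
    field_simp
    ring
  rw [← image_div_one_sub_Ioo, integral_image_eq_integral_abs_deriv_smul measurableSet_Ioo hderiv
    injOn_div_one_sub_Ioo, ← integral_rpow_mul_one_sub_rpow_Ioo ha hb]
  refine setIntegral_congr_fun measurableSet_Ioo fun x ⟨hx0, hx1⟩ => ?_
  have h1x : 0 < 1 - x := sub_pos.2 hx1
  have hsum : 1 + x / (1 - x) = (1 - x)⁻¹ := by
    field_simp
    ring
  rw [smul_eq_mul, abs_of_pos (rpow_pos_of_pos h1x _), hsum, div_rpow hx0.le h1x.le,
    inv_rpow h1x.le, ← rpow_neg h1x.le, neg_neg, div_eq_mul_inv, ← rpow_neg h1x.le]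
  calc (1 - x) ^ (-2 : ℝ) * (x ^ (a - 1) * (1 - x) ^ (-(a - 1)) * (1 - x) ^ (a + b))
      = x ^ (a - 1) * ((1 - x) ^ (-2 : ℝ) * (1 - x) ^ (-(a - 1)) * (1 - x) ^ (a + b)) := by ring
    _ = x ^ (a - 1) * (1 - x) ^ (b - 1) := by
      rw [← rpow_add h1x, ← rpow_add h1x]
      ring_nf

theorem integral_rpow_mul_one_add_div_rpow_neg_Ioi {a b d : ℝ} (ha : 0 < a) (hb : 0 < b)
    (hd : 0 < d) :
    ∫ y in Ioi (0 : ℝ), y ^ (a - 1) * (1 + y / d) ^ (-(a + b)) =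
      d ^ a * (Gamma a * Gamma b / Gamma (a + b)) := by
  have hscale :=
    integral_comp_mul_left_Ioi (fun y => y ^ (a - 1) * (1 + y / d) ^ (-(a + b))) 0 hd
  rw [mul_zero, smul_eq_mul, eq_inv_mul_iff_mul_eq₀ hd.ne'] at hscale
  rw [← hscale, ← integral_rpow_mul_one_add_rpow_neg_Ioi ha hb, ← integral_const_mul,
    ← integral_const_mul]
  refine setIntegral_congr_fun measurableSet_Ioi fun t (ht : 0 < t) => ?_
  rw [mul_div_cancel_left₀ t hd.ne', mul_rpow hd.le ht.le]
  have hda : d ^ a = d * d ^ (a - 1) := by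
    rw [← rpow_one_add' hd.le (by linarith)]
    ring_nf
  rw [hda]
  ring

theorem integral_rpow_mul_comp_sq_Ioi (φ : ℝ → ℝ) (a : ℝ) :
    ∫ r in Ioi (0 : ℝ), r ^ (2 * a - 1) * φ (r ^ 2) =
      1 / 2 * ∫ y in Ioi (0 : ℝ), y ^ (a - 1) * φ y := by
  rw [← integral_comp_rpow_Ioi_of_pos (g := fun y => y ^ (a - 1) * φ y) zero_lt_two,
    ← integral_const_mul]
  refine setIntegral_congr_fun measurableSet_Ioi fun r (hr : 0 < r) => ?_
  have hpow : r ^ (2 * a - 1) = r ^ ((2 : ℝ) - 1) * (r ^ (2 : ℝ)) ^ (a - 1) := by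
    rw [← rpow_mul hr.le, ← rpow_add hr]
    ring_nf
  simp only [smul_eq_mul, hpow, rpow_two]
  ring

theorem InnerProductSpace.integral_fun_norm_sq {E : Type*} [NormedAddCommGroup E]
    [InnerProductSpace ℝ E] [FiniteDimensional ℝ E] [MeasurableSpace E] [BorelSpace E]
    [Nontrivial E] (φ : ℝ → ℝ) :
    ∫ x : E, φ (‖x‖ ^ 2) =
      π ^ ((finrank ℝ E : ℝ) / 2) / Gamma ((finrank ℝ E : ℝ) / 2) *
        ∫ y in Ioi (0 : ℝ), y ^ ((finrank ℝ E : ℝ) / 2 - 1) * φ y := by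
  have hm : 1 ≤ finrank ℝ E := finrank_pos
  have hball : volume.real (Metric.ball (0 : E) 1) =
      π ^ ((finrank ℝ E : ℝ) / 2) / Gamma ((finrank ℝ E : ℝ) / 2 + 1) := by
    rw [measureReal_def, InnerProductSpace.volume_ball, ENNReal.ofReal_one, one_pow, one_mul,
      ENNReal.toReal_ofReal (by positivity), sqrt_eq_rpow, ← rpow_natCast, ← rpow_mul pi_pos.le]
    ring_nf
  have hradial : ∫ r in Ioi (0 : ℝ), r ^ (finrank ℝ E - 1) * φ (r ^ 2) =
      1 / 2 * ∫ y in Ioi (0 : ℝ), y ^ ((finrank ℝ E : ℝ) / 2 - 1) * φ y := by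
    rw [← integral_rpow_mul_comp_sq_Ioi]
    refine setIntegral_congr_fun measurableSet_Ioi fun r _ => ?_
    rw [← rpow_natCast, Nat.cast_sub hm]
    ring_nf
  rw [integral_fun_norm_addHaar volume (fun r => φ (r ^ 2)), nsmul_eq_mul, smul_eq_mul, hball]
  simp only [smul_eq_mul]
  rw [hradial, Gamma_add_one (by positivity)]
  field_simp

theorem integral_fun_sum_sq {m : ℕ} (hm : 0 < m) (φ : ℝ → ℝ) :
    ∫ z : Fin m → ℝ, φ (∑ i, z i ^ 2) =
      π ^ ((m : ℝ) / 2) / Gamma ((m : ℝ) / 2) *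
        ∫ y in Ioi (0 : ℝ), y ^ ((m : ℝ) / 2 - 1) * φ y := by
  have : Nonempty (Fin m) := ⟨⟨0, hm⟩⟩
  have := InnerProductSpace.integral_fun_norm_sq (E := EuclideanSpace ℝ (Fin m)) φ
  rw [finrank_euclideanSpace_fin, ← (PiLp.volume_preserving_toLp (Fin m)).integral_comp
    (MeasurableEquiv.toLp 2 (Fin m → ℝ)).measurableEmbedding] at this
  simpa [EuclideanSpace.norm_sq_eq, sq_abs] using this

theorem logDeriv_const_mul_one_add_div_rpow {K d e u : ℝ} (hK : K ≠ 0) (hd : d ≠ 0)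
    (hu : 0 < 1 + u / d) :
    logDeriv (fun u => K * (1 + u / d) ^ e) u = e / (d + u) := by
  have hderiv :
      HasDerivAt (fun u => K * (1 + u / d) ^ e) (K * (1 / d * e * (1 + u / d) ^ (e - 1))) u :=
    (((hasDerivAt_id' u).div_const d).const_add 1 |>.rpow_const (Or.inl hu.ne')).const_mul K
  have hdu : d + u = d * (1 + u / d) := by field_simp
  have hpow : (1 + u / d) ^ e ≠ 0 := (rpow_pos_of_pos hu e).ne'
  rw [logDeriv_apply, hderiv.deriv, rpow_sub_one hu.ne', hdu]
  -- otherwise `field_simp` rewrites the base `1 + u / d` of the `rpow` as `(d + u) / d`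
  generalize 1 + u / d = B at hu hpow ⊢
  field_simp

theorem Gamma_add_two {s : ℝ} (hs : 0 < s) : Gamma (s + 2) = (s + 1) * s * Gamma s := by
  rw [show s + 2 = s + 1 + 1 by ring, Gamma_add_one (by positivity), Gamma_add_one hs.ne',
    mul_assoc]

noncomputable def tGeneratorConst (m : ℕ) (d : ℝ) : ℝ :=
  (π * d) ^ (-(m : ℝ) / 2) * (Gamma ((d + m) / 2) / Gamma (d / 2))

noncomputable def tGenerator (m : ℕ) (d : ℝ) : ℝ → ℝ := fun u =>
  tGeneratorConst m d * (1 + u / d) ^ (-((m : ℝ) + d) / 2)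

theorem tGeneratorConst_pos (m : ℕ) {d : ℝ} (hd : 0 < d) : 0 < tGeneratorConst m d := by
  unfold tGeneratorConst
  have := Gamma_pos_of_pos (by positivity : 0 < (d + m) / 2)
  have := Gamma_pos_of_pos (by positivity : 0 < d / 2)
  positivity

theorem tGeneratorConst_mul_rpow (m : ℕ) {d : ℝ} (hd : 0 < d) :
    tGeneratorConst m d * (π * d) ^ ((m : ℝ) / 2) = Gamma ((d + m) / 2) / Gamma (d / 2) := by
  rw [tGeneratorConst, mul_right_comm, ← rpow_add (by positivity), neg_div, neg_add_cancel,
    rpow_zero, one_mul]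

theorem rpow_mul_sq_mul_logDeriv_tGenerator_sq {m : ℕ} {d y : ℝ} (hd : 0 < d) (hy : 0 < y) :
    y ^ ((m : ℝ) / 2 - 1) * (y ^ 2 * logDeriv (tGenerator m d) y ^ 2 * tGenerator m d y) =
      tGeneratorConst m d * (((m : ℝ) + d) / (2 * d)) ^ 2 *
        (y ^ ((m : ℝ) / 2 + 2 - 1) * (1 + y / d) ^ (-((m : ℝ) / 2 + 2 + d / 2))) := by
  have hy' : 0 < 1 + y / d := by positivity
  unfold tGenerator
  rw [logDeriv_const_mul_one_add_div_rpow (tGeneratorConst_pos m hd).ne' hd.ne' hy']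
  have hypow : y ^ ((m : ℝ) / 2 + 2 - 1) = y ^ ((m : ℝ) / 2 - 1) * y ^ 2 := by
    rw [← rpow_two, ← rpow_add hy]
    ring_nf
  have hBpow : (1 + y / d) ^ (-((m : ℝ) / 2 + 2 + d / 2)) =
      (1 + y / d) ^ (-((m : ℝ) + d) / 2) / (1 + y / d) ^ 2 := by
    rw [← rpow_two, ← rpow_sub hy']
    ring_nf
  have hdy : d + y = d * (1 + y / d) := by field_simp
  rw [hypow, hBpow, hdy]
  field_simp

theorem integral_sq_mul_logDeriv_sq_tGenerator {m : ℕ} (hm : 0 < m) {d : ℝ} (hd : 0 < d) :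
    ∫ z : Fin m → ℝ, (∑ i, z i ^ 2) ^ 2 * logDeriv (tGenerator m d) (∑ i, z i ^ 2) ^ 2 *
        tGenerator m d (∑ i, z i ^ 2) =
      m * (m + 2) * (m + d) / (4 * (m + 2 + d)) := by
  rw [integral_fun_sum_sq hm (fun u => u ^ 2 * logDeriv (tGenerator m d) u ^ 2 * tGenerator m d u),
    setIntegral_congr_fun measurableSet_Ioi fun y hy =>
      rpow_mul_sq_mul_logDeriv_tGenerator_sq hd hy,
    integral_const_mul,
    integral_rpow_mul_one_add_div_rpow_neg_Ioi (by positivity) (by positivity) hd]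
  have hK : tGeneratorConst m d =
      Gamma ((d + m) / 2) / Gamma (d / 2) / (π ^ ((m : ℝ) / 2) * d ^ ((m : ℝ) / 2)) := by
    rw [← mul_rpow pi_pos.le hd.le, ← tGeneratorConst_mul_rpow m hd,
      mul_div_cancel_right₀ _ (by positivity)]
  have hΓmd : Gamma ((m : ℝ) / 2 + 2 + d / 2) = Gamma ((d + m) / 2 + 2) := by
    ring_nf
  have hd2 : d ^ ((m : ℝ) / 2 + 2) = d ^ ((m : ℝ) / 2) * d ^ 2 := by
    rw [rpow_add hd, rpow_two]
  have hΓm_pos := Gamma_pos_of_pos (by positivity : 0 < (m : ℝ) / 2)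
  have hΓd_pos := Gamma_pos_of_pos (by positivity : 0 < d / 2)
  have hΓmd_pos := Gamma_pos_of_pos (by positivity : 0 < (d + m) / 2)
  rw [hK, hΓmd, Gamma_add_two (by positivity), Gamma_add_two (by positivity), hd2]
  field_simp
  ring

/-- The Fisher-information constant `J₂` for the multivariate `t` density generator. -/
theorem t_distribution_J2 (p n : ℕ) (hp : 0 < p) (hn : 0 < n) (d : ℝ) (hd : 0 < d)
    (K : ℝ)
    (hK : K = (π * d) ^ (-((p * n : ℕ) : ℝ) / 2) *
        (Real.Gamma ((d + (p * n : ℕ)) / 2) / Real.Gamma (d / 2)))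
    (f : ℝ → ℝ)
    (hf : f = fun u => K * (1 + u / d) ^ (-(((p * n : ℕ) : ℝ) + d) / 2))
    (J₂ : ℝ)
    (hJ₂ : J₂ = ∫ z : Fin (p * n) → ℝ,
        (∑ i, z i ^ 2) ^ 2 * (deriv f (∑ i, z i ^ 2) / f (∑ i, z i ^ 2)) ^ 2 *
          f (∑ i, z i ^ 2)) :
    J₂ = (p * n : ℝ) * ((p * n : ℝ) + 2) * ((p * n : ℝ) + d) /
        (4 * ((p * n : ℝ) + 2 + d)) ∧
      J₂ / (2 * (p * n : ℝ) + (p : ℝ) ^ 2 * (n : ℝ) ^ 2) - 1 / 4 =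
        1 / 4 * (((p * n : ℝ) + d) / ((p * n : ℝ) + d + 2) - 1) ∧
      J₂ / (2 * (p * n : ℝ) + (p : ℝ) ^ 2 * (n : ℝ) ^ 2) - 1 / 4 < 0 := by
  have hJ : J₂ = (p * n : ℝ) * ((p * n : ℝ) + 2) * ((p * n : ℝ) + d) /
      (4 * ((p * n : ℝ) + 2 + d)) := by
    subst hJ₂ hf hK
    -- `logDeriv g u` unfolds to `deriv g u / g u`, and `f` to `tGenerator (p * n) d`
    have hmain := integral_sq_mul_logDeriv_sq_tGenerator (Nat.mul_pos hp hn) hd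
    push_cast at hmain
    exact hmain
  have hgap : J₂ / (2 * (p * n : ℝ) + (p : ℝ) ^ 2 * (n : ℝ) ^ 2) - 1 / 4 =
      1 / 4 * (((p * n : ℝ) + d) / ((p * n : ℝ) + d + 2) - 1) := by
    rw [hJ]
    field_simp
    ring
  have hlt : ((p * n : ℝ) + d) / ((p * n : ℝ) + d + 2) < 1 :=
    (div_lt_one (by positivity)).2 (by linarith)
  exact ⟨hJ, hgap, by linarith⟩
end
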